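/- Let W be a finite-dimensional vector space over ZMod 2 and B : W → W → ZMod 2 a nondegenerate alternating bilinear form. Then for every quadratic refinement q of B, the Gauss sum G(q) = Σ_{β ∈ W} χ(q β) ∈ ℤ satisfies G(q)² = card W. (In particular, writing dim W = 2g, G(q) = ±2^g, so the Arf invariant of q is well defined by (−1)^{Arf(q)} = 2^{−g} G(q).) -/
import Mathlib


open scoped BigOperators

/-- The sign character `χ : ZMod 2 → ℤ`, `χ 0 = 1`, `χ 1 = -1`. -/
def chi : ZMod 2 → ℤ := fun x => if x = 0 then 1 else -1

lemma chi_add (a b : ZMod 2) : chi (a + b) = chi a * chi b := by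
  fin_cases a <;> fin_cases b <;> decide

theorem gauss_sum_sq_eq_card
    {W : Type*} [AddCommGroup W] [Module (ZMod 2) W] [Fintype W] [DecidableEq W]
    (B : W → W → ZMod 2)
    (hB₁ : ∀ x y z : W, B (x + y) z = B x z + B y z)
    (hB₂ : ∀ x y z : W, B z (x + y) = B z x + B z y)
    (hBalt : ∀ x : W, B x x = 0)
    (hBnd : ∀ x : W, (∀ y : W, B x y = 0) → x = 0)
    (q : W → ZMod 2)
    (hq : ∀ x y : W, q (x + y) = q x + q y + B x y) :
    (∑ β : W, chi (q β)) ^ 2 = Fintype.card W := by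
  have hchar : ∀ a : ZMod 2, a + a = 0 := by decide
  have hq0 : q 0 = 0 := by
    have h := hq 0 0
    rw [add_zero, hBalt, add_zero, hchar] at h
    exact h
  -- B x 0 = 0
  have hB0 : ∀ x : W, B x 0 = 0 := by
    intro x
    have h := hB₂ 0 0 x
    rw [add_zero, hchar] at h
    exact h
  -- symmetry
  have hsym : ∀ x y : W, B x y = B y x := by
    intro x y
    have h := hBalt (x + y)
    rw [hB₁, hB₂, hB₂, hBalt, hBalt, zero_add, add_zero] at h
    have key : ∀ a b : ZMod 2, a + b = 0 → a = b := by decide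
    exact key _ _ h
  -- inner sum vanishes for z ≠ 0
  have hinner : ∀ z : W, z ≠ 0 → ∑ x : W, chi (B x z) = 0 := by
    intro z hz
    obtain ⟨x₀, hx₀⟩ : ∃ x, B x z ≠ 0 := by
      by_contra h
      push_neg at h
      exact hz (hBnd z (fun y => (hsym z y).trans (h y)))
    have hx1 : B x₀ z = 1 := by
      have : ∀ a : ZMod 2, a ≠ 0 → a = 1 := by decide
      exact this _ hx₀
    have key : ∑ x : W, chi (B x z) = ∑ x : W, chi (B (x + x₀) z) :=
      (Fintype.sum_equiv (Equiv.addRight x₀) _ _ (fun x => rfl)).symm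
    have key2 : ∀ x : W, chi (B (x + x₀) z) = - chi (B x z) := by
      intro x
      rw [hB₁, chi_add, hx1]
      simp [chi]
    have : ∑ x : W, chi (B x z) = - ∑ x : W, chi (B x z) := by
      calc ∑ x : W, chi (B x z) = ∑ x : W, chi (B (x + x₀) z) := key
        _ = ∑ x : W, - chi (B x z) := Finset.sum_congr rfl (fun x _ => key2 x)
        _ = - ∑ x : W, chi (B x z) := by rw [Finset.sum_neg_distrib]
    linarith
  calc (∑ β : W, chi (q β)) ^ 2
      = ∑ x : W, ∑ y : W, chi (q x) * chi (q y) := by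
        rw [sq, Finset.sum_mul_sum]
    _ = ∑ x : W, ∑ z : W, chi (q z) * chi (B x z) := by
        refine Finset.sum_congr rfl (fun x _ => ?_)
        calc ∑ y : W, chi (q x) * chi (q y)
            = ∑ z : W, chi (q x) * chi (q (x + z)) :=
              (Fintype.sum_equiv (Equiv.addLeft x) _ _ (fun z => rfl)).symm
          _ = ∑ z : W, chi (q z) * chi (B x z) := ?_
        refine Finset.sum_congr rfl (fun z _ => ?_)
        rw [← chi_add, ← chi_add, hq]
        congr 1
        have := hchar (q x)
        abel_nf
        rw [show (2 : ℤ) • q x = q x + q x by rw [two_smul], hchar]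
        abel
    _ = ∑ z : W, chi (q z) * ∑ x : W, chi (B x z) := by
        rw [Finset.sum_comm]
        exact Finset.sum_congr rfl (fun z _ => (Finset.mul_sum _ _ _).symm)
    _ = Fintype.card W := by
        rw [Finset.sum_eq_single 0]
        · rw [hq0]
          simp [chi, hB0, Finset.card_univ]
        · intro z _ hz
          rw [hinner z hz, mul_zero]
        · intro h
          exact absurd (Finset.mem_univ 0) h
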